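/- If a real number C satisfies γ(a, |C/b|^{1/a}) = Sgn(C)·((k₂ − k₁)/(k₁ + k₂))·Γ(a), then the ratio of the minimized to the unshifted expected loss satisfies (∫ L(z + C)·f(z) dz) / (∫ L(z)·f(z) dz) = Γ-upper(2a, |C/b|^{1/a}) / Γ(2a). -/

import Mathlib

open Real MeasureTheory Filter

/-- The asymmetric loss function. -/
noncomputable def asymLoss (k₁ k₂ z : ℝ) : ℝ := if 0 ≤ z then k₁ * z else -k₂ * z

/-- The generalized Gaussian density with mean zero. -/
noncomputable def genGauss (a b z : ℝ) : ℝ :=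
  (2 * a * b * Real.Gamma a)⁻¹ * Real.exp (-(|z / b| ^ (1 / a)))

/-- The lower incomplete gamma function. -/
noncomputable def lowerGamma (p x : ℝ) : ℝ := ∫ t in (0:ℝ)..x, t ^ (p - 1) * Real.exp (-t)

/-- The upper incomplete gamma function. -/
noncomputable def upperGamma (p x : ℝ) : ℝ := ∫ t in Set.Ioi x, t ^ (p - 1) * Real.exp (-t)

/-- The sign function used in the paper: `1` for `c ≥ 0`, `-1` for `c < 0`. -/
noncomputable def Sgn (c : ℝ) : ℝ := if 0 ≤ c then 1 else -1


/-!
Write `L(w) = k₁ w + (k₁ + k₂) max(-w, 0)`. Since `f` is an even probability density, the expected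
loss at a shift `C ≥ 0` is `k₁ C + (k₁ + k₂) ∫_{z > C} (z - C) f(z) dz`, and the substitution
`z = b t^a` turns the two tail moments into upper incomplete gamma functions: with
`x = (C / b)^(1/a)` the loss is `k₁ C + (k₁ + k₂) (b Γ(2a, x) - C Γ(a, x)) / (2 Γ(a))`.
The hypothesis on `C` says `(k₁ + k₂) Γ(a, x) = 2 k₁ Γ(a)`, so the terms linear in `C` cancel,
and `C = 0` gives the denominator. The reflection `z ↦ -z` swaps `k₁` and `k₂` and reduces the
case `C < 0` to this one.
-/

open Set

lemma upperGamma_zero {p : ℝ} (hp : 0 < p) : upperGamma p 0 = Gamma p := by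
  rw [Gamma_eq_integral hp, upperGamma]
  exact setIntegral_congr_fun measurableSet_Ioi fun t _ => mul_comm _ _

lemma lowerGamma_add_upperGamma {p x : ℝ} (hp : 0 < p) (hx : 0 ≤ x) :
    lowerGamma p x + upperGamma p x = Gamma p := by
  have hint : IntegrableOn (fun t : ℝ => t ^ (p - 1) * exp (-t)) (Ioi 0) :=
    (GammaIntegral_convergent hp).congr_fun (fun _ _ => mul_comm _ _) measurableSet_Ioi
  rw [← upperGamma_zero hp, lowerGamma, upperGamma, upperGamma,
    intervalIntegral.integral_interval_add_Ioi hint (hint.mono_set (Ioi_subset_Ioi hx))]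

lemma asymLoss_eq_mul_add_max (k₁ k₂ w : ℝ) :
    asymLoss k₁ k₂ w = k₁ * w + (k₁ + k₂) * max (-w) 0 := by
  unfold asymLoss
  split_ifs with hw
  · rw [max_eq_right (neg_nonpos.2 hw)]; ring
  · rw [max_eq_left (by linarith)]; ring

lemma asymLoss_neg (k₁ k₂ w : ℝ) : asymLoss k₁ k₂ (-w) = asymLoss k₂ k₁ w := by
  rw [asymLoss_eq_mul_add_max, asymLoss_eq_mul_add_max, neg_neg]
  rcases le_total 0 w with hw | hw
  · rw [max_eq_left hw, max_eq_right (neg_nonpos.2 hw)]; ring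
  · rw [max_eq_right hw, max_eq_left (neg_nonneg.2 hw)]; ring

section EvenDensity

variable {g : ℝ → ℝ}

lemma integral_mul_eq_zero_of_even (hg : ∀ z, g (-z) = g z) : ∫ z, z * g z = 0 := by
  have h := integral_neg_eq_self (fun z => z * g z) volume
  simp only [hg, neg_mul, integral_neg] at h
  linarith

lemma integral_asymLoss_add_mul_swap (hg : ∀ z, g (-z) = g z) (k₁ k₂ C : ℝ) :
    ∫ z, asymLoss k₁ k₂ (z + C) * g z = ∫ z, asymLoss k₂ k₁ (z - C) * g z := by
  rw [← integral_neg_eq_self]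
  congr 1 with z
  rw [hg, ← asymLoss_neg]
  ring_nf

lemma integral_asymLoss_add_mul (hg : ∀ z, g (-z) = g z) (hgi : Integrable g)
    (hzg : Integrable fun z => z * g z) (k₁ k₂ C : ℝ) :
    ∫ z, asymLoss k₁ k₂ (z + C) * g z
      = k₁ * C * (∫ z, g z) + (k₁ + k₂) * ∫ z in Ioi C, (z - C) * g z := by
  have hlin : Integrable fun z => (z + C) * g z :=
    (hzg.add (hgi.const_mul C)).congr (ae_of_all _ fun z => by simp only [Pi.add_apply]; ring)
  have hmean : ∫ z, (z + C) * g z = C * ∫ z, g z := by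
    simp_rw [add_mul]
    rw [integral_add hzg (hgi.const_mul C), integral_mul_eq_zero_of_even hg, integral_const_mul,
      zero_add]
  have hmax : Integrable fun z => max (-(z + C)) 0 * g z :=
    hlin.mono (by fun_prop) (ae_of_all _ fun z => by
      rw [norm_mul, norm_mul, Real.norm_eq_abs, Real.norm_eq_abs,
        abs_of_nonneg (le_max_right _ _)]
      gcongr
      exact max_le (neg_le_abs _) (abs_nonneg _))
  have htail : ∫ z, max (-(z + C)) 0 * g z = ∫ z in Ioi C, (z - C) * g z := by
    rw [← integral_neg_eq_self, ← setIntegral_eq_integral_of_forall_compl_eq_zero (s := Ioi C)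
      fun z hz => by rw [hg, max_eq_right (by linarith [not_lt.1 (show ¬C < z from hz)]), zero_mul]]
    refine setIntegral_congr_fun measurableSet_Ioi fun z hz => ?_
    rw [hg, max_eq_left (by linarith [mem_Ioi.1 hz])]
    ring
  calc ∫ z, asymLoss k₁ k₂ (z + C) * g z
      = ∫ z, (k₁ * ((z + C) * g z) + (k₁ + k₂) * (max (-(z + C)) 0 * g z)) := by
        congr 1 with z
        rw [asymLoss_eq_mul_add_max]
        ring
    _ = _ := by
        rw [integral_add (hlin.const_mul k₁) (hmax.const_mul _), integral_const_mul,
          integral_const_mul, hmean, htail]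
        ring

end EvenDensity

lemma genGauss_neg (a b z : ℝ) : genGauss a b (-z) = genGauss a b z := by
  rw [genGauss, genGauss, neg_div, abs_neg]

lemma genGauss_abs (a b z : ℝ) : genGauss a b |z| = genGauss a b z := by
  rcases le_total 0 z with hz | hz
  · rw [abs_of_nonneg hz]
  · rw [abs_of_nonpos hz, genGauss_neg]

section GenGauss

variable {a b : ℝ}

lemma integral_Ioi_rpow_mul_exp_neg_rpow_one_div (ha : 0 < a) (q : ℝ) {c : ℝ} (hc : 0 ≤ c) :
    ∫ y in Ioi c, y ^ q * exp (-y ^ (1 / a)) = a * upperGamma (a * (q + 1)) (c ^ (1 / a)) := by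
  rw [← integral_comp_rpow_Ioi_of_pos' ha hc, upperGamma, ← integral_const_mul, one_div]
  refine setIntegral_congr_fun measurableSet_Ioi fun x hx => ?_
  have hx : 0 < x := (rpow_nonneg hc _).trans_lt hx
  rw [smul_eq_mul, rpow_rpow_inv hx.le ha.ne', ← rpow_mul hx.le,
    show a * (q + 1) - 1 = (a - 1) + a * q by ring, rpow_add hx]
  ring

lemma integral_Ioi_rpow_mul_genGauss (ha : 0 < a) (hb : 0 < b) (q : ℝ) {c : ℝ} (hc : 0 ≤ c) :
    ∫ z in Ioi c, z ^ q * genGauss a b z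
      = b ^ q * upperGamma (a * (q + 1)) ((c / b) ^ (1 / a)) / (2 * Gamma a) := by
  have hscale := integral_comp_mul_left_Ioi' (fun z => z ^ q * genGauss a b z) (c / b) hb
  rw [mul_div_cancel₀ c hb.ne'] at hscale
  have hcongr : ∀ y ∈ Ioi (c / b), b * ((b * y) ^ q * genGauss a b (b * y))
      = b ^ q / (2 * a * Gamma a) * (y ^ q * exp (-y ^ (1 / a))) := fun y hy => by
    have hy : 0 < y := (div_nonneg hc hb.le).trans_lt hy
    rw [genGauss, mul_div_cancel_left₀ y hb.ne', abs_of_pos hy, mul_rpow hb.le hy.le]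
    field_simp
  rw [← hscale, smul_eq_mul, ← integral_const_mul, setIntegral_congr_fun measurableSet_Ioi hcongr,
    integral_const_mul, integral_Ioi_rpow_mul_exp_neg_rpow_one_div ha q (by positivity)]
  field_simp

lemma integral_abs_rpow_mul_genGauss (ha : 0 < a) (hb : 0 < b) {q : ℝ} (hq : -1 < q) :
    ∫ z, |z| ^ q * genGauss a b z = b ^ q * Gamma (a * (q + 1)) / Gamma a := by
  have hΓ := Gamma_pos_of_pos ha
  calc ∫ z, |z| ^ q * genGauss a b z = ∫ z, |z| ^ q * genGauss a b |z| := by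
        simp_rw [genGauss_abs]
    _ = 2 * ∫ z in Ioi 0, z ^ q * genGauss a b z :=
        integral_comp_abs (f := fun z => z ^ q * genGauss a b z)
    _ = b ^ q * Gamma (a * (q + 1)) / Gamma a := by
        rw [integral_Ioi_rpow_mul_genGauss ha hb q le_rfl, zero_div,
          zero_rpow (one_div_pos.2 ha).ne', upperGamma_zero (by nlinarith)]
        field_simp

lemma integral_genGauss (ha : 0 < a) (hb : 0 < b) : ∫ z, genGauss a b z = 1 := by
  simpa [(Gamma_pos_of_pos ha).ne'] using integral_abs_rpow_mul_genGauss ha hb neg_one_lt_zero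

lemma integrable_genGauss (ha : 0 < a) (hb : 0 < b) : Integrable (genGauss a b) :=
  .of_integral_ne_zero (by rw [integral_genGauss ha hb]; exact one_ne_zero)

lemma integrable_mul_genGauss (ha : 0 < a) (hb : 0 < b) :
    Integrable fun z => z * genGauss a b z := by
  have habs : ∫ z, |z| ^ (1 : ℝ) * genGauss a b z ≠ 0 := by
    rw [integral_abs_rpow_mul_genGauss ha hb (by norm_num)]
    have := Gamma_pos_of_pos ha
    have := Gamma_pos_of_pos (show 0 < a * (1 + 1) by positivity)
    positivity
  refine (Integrable.of_integral_ne_zero habs).mono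
    (continuous_id.aestronglyMeasurable.mul (integrable_genGauss ha hb).1)
    (ae_of_all _ fun z => ?_)
  simp

lemma integral_Ioi_sub_mul_genGauss (ha : 0 < a) (hb : 0 < b) {c : ℝ} (hc : 0 ≤ c) :
    ∫ z in Ioi c, (z - c) * genGauss a b z
      = (b * upperGamma (2 * a) ((c / b) ^ (1 / a)) - c * upperGamma a ((c / b) ^ (1 / a)))
        / (2 * Gamma a) := by
  have h₁ := integral_Ioi_rpow_mul_genGauss ha hb 1 hc
  have h₀ := integral_Ioi_rpow_mul_genGauss ha hb 0 hc
  simp only [rpow_one, rpow_zero, one_mul, zero_add, mul_one] at h₁ h₀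
  simp_rw [sub_mul]
  rw [integral_sub (integrable_mul_genGauss ha hb).integrableOn
    ((integrable_genGauss ha hb).const_mul c).integrableOn, integral_const_mul, h₁, h₀,
    show a * (1 + 1) = 2 * a by ring]
  ring

lemma integral_asymLoss_add_mul_genGauss (ha : 0 < a) (hb : 0 < b) (k₁ k₂ : ℝ) {C : ℝ}
    (hC : 0 ≤ C) :
    ∫ z, asymLoss k₁ k₂ (z + C) * genGauss a b z
      = k₁ * C + (k₁ + k₂) * ((b * upperGamma (2 * a) ((C / b) ^ (1 / a))
          - C * upperGamma a ((C / b) ^ (1 / a))) / (2 * Gamma a)) := by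
  rw [integral_asymLoss_add_mul (genGauss_neg a b) (integrable_genGauss ha hb)
    (integrable_mul_genGauss ha hb), integral_genGauss ha hb, integral_Ioi_sub_mul_genGauss ha hb hC,
    mul_one]

lemma integral_asymLoss_add_mul_genGauss_of_lowerGamma_eq (ha : 0 < a) (hb : 0 < b) {k₁ k₂ C : ℝ}
    (hk : k₁ + k₂ ≠ 0) (hC : 0 ≤ C)
    (h : lowerGamma a ((C / b) ^ (1 / a)) = (k₂ - k₁) / (k₁ + k₂) * Gamma a) :
    ∫ z, asymLoss k₁ k₂ (z + C) * genGauss a b z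
      = (k₁ + k₂) * b / (2 * Gamma a) * upperGamma (2 * a) ((C / b) ^ (1 / a)) := by
  have hΓ := (Gamma_pos_of_pos ha).ne'
  have hsplit := lowerGamma_add_upperGamma ha (x := (C / b) ^ (1 / a)) (by positivity)
  have hupper : (k₁ + k₂) * upperGamma a ((C / b) ^ (1 / a)) = 2 * k₁ * Gamma a := by
    rw [eq_sub_of_add_eq' hsplit, h]
    field_simp
    ring
  rw [integral_asymLoss_add_mul_genGauss ha hb k₁ k₂ hC]
  field_simp
  linear_combination -C * hupper

end GenGauss

theorem expected_loss_ratio (a b k₁ k₂ : ℝ) (ha : 0 < a) (hb : 0 < b)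
    (hk₁ : 0 < k₁) (hk₂ : 0 < k₂) (C : ℝ)
    (hC : lowerGamma a (|C / b| ^ (1 / a)) = Sgn C * ((k₂ - k₁) / (k₁ + k₂)) * Real.Gamma a) :
    (∫ z, asymLoss k₁ k₂ (z + C) * genGauss a b z)
      / (∫ z, asymLoss k₁ k₂ z * genGauss a b z) =
      upperGamma (2 * a) (|C / b| ^ (1 / a)) / Real.Gamma (2 * a) := by
  have hΓ := Gamma_pos_of_pos ha
  have hden : ∫ z, asymLoss k₁ k₂ z * genGauss a b z
      = (k₁ + k₂) * b / (2 * Gamma a) * Gamma (2 * a) := by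
    have h := integral_asymLoss_add_mul_genGauss ha hb k₁ k₂ le_rfl
    rw [zero_div, zero_rpow (one_div_pos.2 ha).ne', upperGamma_zero (by positivity)] at h
    simp only [add_zero, mul_zero] at h
    rw [h]
    ring
  have hnum : ∫ z, asymLoss k₁ k₂ (z + C) * genGauss a b z
      = (k₁ + k₂) * b / (2 * Gamma a) * upperGamma (2 * a) (|C / b| ^ (1 / a)) := by
    rcases le_or_gt 0 C with hC₀ | hC₀
    · rw [abs_of_nonneg (div_nonneg hC₀ hb.le)] at hC ⊢
      rw [Sgn, if_pos hC₀, one_mul] at hC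
      exact integral_asymLoss_add_mul_genGauss_of_lowerGamma_eq ha hb (by positivity) hC₀ hC
    · rw [abs_of_neg (div_neg_of_neg_of_pos hC₀ hb), ← neg_div] at hC ⊢
      rw [Sgn, if_neg hC₀.not_ge] at hC
      rw [integral_asymLoss_add_mul_swap (genGauss_neg a b), add_comm k₁ k₂]
      simp_rw [sub_eq_add_neg]
      refine integral_asymLoss_add_mul_genGauss_of_lowerGamma_eq ha hb (by positivity)
        (by linarith) ?_
      rw [hC]
      ring
  rw [hnum, hden, mul_div_mul_left _ _ (by positivity)]
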